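/- arXiv:2402.14953 — 13 statements merged into one kernel-verified Lean document; each statement's English description precedes it below -/
import Mathlib

section
/- Every finite simple graph G on n vertices admits a min-plus n-tropical dot product representation; in particular, the min-plus tropical dot product dimension ρ_T(G) is well defined and satisfies ρ_T(G) ≤ n. -/
/-- A min-plus `k`-tropical dot product representation of `G` with threshold `t`:
distinct vertices `x, y` are adjacent iff `min_{1 ≤ i ≤ k} (f(x)_i + f(y)_i) ≥ t`
(equivalently, every coordinate sum is at least `t`). -/
def MinPlusRep {V : Type*} (G : SimpleGraph V) (k : ℕ) (f : V → Fin k → ℝ) (t : ℝ) : Prop :=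
  0 < t ∧ ∀ x y : V, x ≠ y → (G.Adj x y ↔ ∀ i : Fin k, t ≤ f x i + f y i)

/-- The min-plus tropical dot product dimension `ρ_T(G)`. -/
noncomputable def rhoT {V : Type*} (G : SimpleGraph V) : ℕ :=
  sInf {k : ℕ | 0 < k ∧ ∃ (f : V → Fin k → ℝ) (t : ℝ), MinPlusRep G k f t}

/-!
Index the coordinates by the vertices. Vertex `v` gets `0` in its own coordinate, `2` in the
coordinates of its neighbours and `1` elsewhere, and the threshold is `2`. Off the coordinates
of `x` and `y` the sum is at least `1 + 1`; in the coordinate of `x` it is `0 + f(y)_x`, which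
reaches `2` exactly when `y` is adjacent to `x`.
-/

namespace SimpleGraph

variable {V : Type*} (G : SimpleGraph V) [DecidableEq V] [DecidableRel G.Adj]

def adjWeight (v w : V) : ℝ :=
  if v = w then 0 else if G.Adj v w then 2 else 1

variable {G}

@[simp]
theorem adjWeight_self (v : V) : G.adjWeight v v = 0 := if_pos rfl

theorem adjWeight_of_adj {v w : V} (h : G.Adj v w) : G.adjWeight v w = 2 := by
  simp [adjWeight, h.ne, h]

theorem adjWeight_of_not_adj {v w : V} (hne : v ≠ w) (h : ¬G.Adj v w) :
    G.adjWeight v w = 1 := by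
  simp [adjWeight, hne, h]

theorem one_le_adjWeight {v w : V} (hne : v ≠ w) : 1 ≤ G.adjWeight v w := by
  by_cases h : G.Adj v w
  · rw [adjWeight_of_adj h]; norm_num
  · rw [adjWeight_of_not_adj hne h]

theorem adj_iff_forall_two_le_adjWeight_add {x y : V} (hxy : x ≠ y) :
    G.Adj x y ↔ ∀ w, 2 ≤ G.adjWeight x w + G.adjWeight y w := by
  constructor
  · intro hadj w
    by_cases hx : x = w
    · subst hx
      rw [adjWeight_self, adjWeight_of_adj hadj.symm]; norm_num
    by_cases hy : y = w
    · subst hy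
      rw [adjWeight_self, adjWeight_of_adj hadj]; norm_num
    linarith [one_le_adjWeight (G := G) hx, one_le_adjWeight (G := G) hy]
  · intro h
    by_contra hadj
    have hx := h x
    rw [adjWeight_self, adjWeight_of_not_adj hxy.symm fun h' => hadj h'.symm] at hx
    norm_num at hx

theorem minPlusRep_adjWeight_comp {k : ℕ} {e : Fin k → V} (he : Function.Surjective e) :
    MinPlusRep G k (fun v i => G.adjWeight v (e i)) 2 := by
  refine ⟨two_pos, fun x y hxy => ?_⟩
  rw [adj_iff_forall_two_le_adjWeight_add hxy]
  exact he.forall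

end SimpleGraph

theorem rhoT_le_of_minPlusRep {V : Type*} {G : SimpleGraph V} {k : ℕ} (hk : 0 < k)
    {f : V → Fin k → ℝ} {t : ℝ} (h : MinPlusRep G k f t) : rhoT G ≤ k :=
  Nat.sInf_le ⟨hk, f, t, h⟩

/-- Every finite simple graph on `n` vertices admits a min-plus `n`-tropical dot product
representation; in particular `ρ_T(G) ≤ n`. -/
theorem stmt_0 {V : Type*} [Fintype V] [Nonempty V] (G : SimpleGraph V) :
    (∃ (f : V → Fin (Fintype.card V) → ℝ) (t : ℝ), MinPlusRep G (Fintype.card V) f t) ∧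
      rhoT G ≤ Fintype.card V := by
  classical
  have hrep := G.minPlusRep_adjWeight_comp (Fintype.equivFin V).symm.surjective
  exact ⟨⟨_, _, hrep⟩, rhoT_le_of_minPlusRep Fintype.card_pos hrep⟩
end

section
/- For any finite simple graph G and any vertex v of G, the min-plus tropical dot product dimension satisfies ρ_T(G) ≤ ρ_T(G − v) + 1, where G − v is the subgraph of G induced on V(G) \ {v}. -/
/-!
Given a representation `f` of `G − v` with threshold `t`, keep `f` on the old vertices and give
`v` a constant value `B` so large that every old coordinate sum involving `v` reaches `t`. One
new coordinate then decides the adjacencies at `v`: it is `0` at `v`, `t` at the neighbours of `v`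
and `t / 2` at the other vertices, so that two old vertices always pass it.
-/

lemma Fin.forall_le_snoc_add_snoc {k : ℕ} {t x y : ℝ} {a b : Fin k → ℝ} :
    (∀ i, t ≤ (Fin.snoc a x : Fin (k + 1) → ℝ) i + (Fin.snoc b y : Fin (k + 1) → ℝ) i) ↔
      (∀ i, t ≤ a i + b i) ∧ t ≤ x + y := by
  simp only [Fin.forall_fin_succ', Fin.snoc_castSucc, Fin.snoc_last]

lemma exists_forall_le_add {W ι : Type*} [Finite W] [Finite ι] (f : W → ι → ℝ) (t : ℝ) :
    ∃ B : ℝ, ∀ w i, t ≤ B + f w i := by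
  obtain ⟨m, hm⟩ := (Set.finite_range fun p : W × ι => f p.1 p.2).bddBelow
  exact ⟨t - m, fun w i => by linarith [hm ⟨(w, i), rfl⟩]⟩

namespace SimpleGraph

section VertexCoord

variable {W : Type*} (H : SimpleGraph W) [DecidableEq W] [DecidableRel H.Adj]

/-- Only the coordinate `u = x` can separate `x` from `y ≠ x`, and it does so exactly when they are
not adjacent. -/
noncomputable def vertexCoord (w u : W) : ℝ :=
  if w = u then 0 else if H.Adj w u then 2 else 1

lemma two_le_vertexCoord_add {x y u : W} (hxy : x ≠ y) (hadj : H.Adj x y) :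
    2 ≤ H.vertexCoord x u + H.vertexCoord y u := by
  unfold vertexCoord
  by_cases hx : x = u
  · subst hx
    simp [Ne.symm hxy, hadj.symm]
  · by_cases hy : y = u
    · subst hy
      simp [hxy, hadj]
    · simp only [hx, hy, if_false]
      split_ifs <;> norm_num

lemma adj_of_two_le_vertexCoord_add {x y : W} (h : 2 ≤ H.vertexCoord x x + H.vertexCoord y x) :
    H.Adj x y := by
  by_contra hadj
  have hyx : ¬H.Adj y x := fun h => hadj h.symm
  simp only [vertexCoord, hyx, if_false] at h
  split_ifs at h <;> norm_num at h

end VertexCoord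

section Existence

variable {W : Type*} (H : SimpleGraph W)

lemma exists_minPlusRep [Finite W] : ∃ k, 0 < k ∧ ∃ f t, MinPlusRep H k f t := by
  classical
  have := Fintype.ofFinite W
  let e := (Fintype.equivFin (Option W)).symm
  -- the constant coordinate `none` only serves to make `k` positive when `W` is empty
  let coord : W → Option W → ℝ := fun w o => o.elim 1 (H.vertexCoord w)
  refine ⟨_, Fintype.card_pos, fun w i => coord w (e i), 2, two_pos, fun x y hxy => ?_⟩
  rw [e.forall_congr_right (q := fun o => 2 ≤ coord x o + coord y o), Option.forall]
  simp only [coord, Option.elim_none, Option.elim_some]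
  refine ⟨fun hadj => ⟨by norm_num, fun u => H.two_le_vertexCoord_add hxy hadj⟩,
    fun h => H.adj_of_two_le_vertexCoord_add (h.2 x)⟩

lemma rhoT_le {k : ℕ} {f : W → Fin k → ℝ} {t : ℝ} (hk : 0 < k) (hf : MinPlusRep H k f t) :
    rhoT H ≤ k :=
  Nat.sInf_le ⟨hk, f, t, hf⟩

lemma exists_minPlusRep_rhoT [Finite W] : ∃ f t, MinPlusRep H (rhoT H) f t :=
  (Nat.sInf_mem H.exists_minPlusRep).2

end Existence

section Extension

variable {V : Type*} [DecidableEq V] (G : SimpleGraph V) [DecidableRel G.Adj] (v : V) {k : ℕ}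

noncomputable def extendRep (f : ({v}ᶜ : Set V) → Fin k → ℝ) (t B : ℝ) (x : V) :
    Fin (k + 1) → ℝ :=
  if hx : x = v then Fin.snoc (fun _ => B) 0
  else Fin.snoc (f ⟨x, hx⟩) (if G.Adj v x then t else t / 2)

variable {G v} {f : ({v}ᶜ : Set V) → Fin k → ℝ} {t B : ℝ}

lemma extendRep_of_ne {x : V} (hx : x ≠ v) :
    G.extendRep v f t B x = Fin.snoc (f ⟨x, hx⟩) (if G.Adj v x then t else t / 2) :=
  dif_neg hx

lemma adj_iff_extendRep_center (ht : 0 < t) (hB : ∀ w i, t ≤ B + f w i) {y : V} (hy : y ≠ v) :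
    G.Adj v y ↔ ∀ i, t ≤ G.extendRep v f t B v i + G.extendRep v f t B y i := by
  rw [extendRep_of_ne hy, extendRep, dif_pos rfl, Fin.forall_le_snoc_add_snoc]
  split_ifs with hadj
  · simpa [hadj] using fun i => hB _ i
  · simp only [hadj, false_iff, not_and, zero_add]
    intro _
    linarith

lemma _root_.MinPlusRep.extendRep (hf : MinPlusRep (G.induce {v}ᶜ) k f t) (hB : ∀ w i, t ≤ B + f w i) :
    MinPlusRep G (k + 1) (G.extendRep v f t B) t := by
  refine ⟨hf.1, fun x y hxy => ?_⟩
  by_cases hx : x = v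
  · subst hx
    exact adj_iff_extendRep_center hf.1 hB (Ne.symm hxy)
  by_cases hy : y = v
  · subst hy
    rw [G.adj_comm, adj_iff_extendRep_center hf.1 hB hx]
    exact forall_congr' fun i => by rw [add_comm]
  have hlast : t ≤ (if G.Adj v x then t else t / 2) + (if G.Adj v y then t else t / 2) := by
    split_ifs <;> linarith [hf.1]
  rw [extendRep_of_ne hx, extendRep_of_ne hy, Fin.forall_le_snoc_add_snoc, and_iff_left hlast,
    ← hf.2 ⟨x, hx⟩ ⟨y, hy⟩ (Subtype.coe_ne_coe.mp hxy), comap_adj, Function.Embedding.coe_subtype]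

end Extension

end SimpleGraph

/-- For any vertex `v`, `ρ_T(G) ≤ ρ_T(G − v) + 1`. -/
theorem stmt_1 {V : Type*} [Fintype V] (G : SimpleGraph V) (v : V) :
    rhoT G ≤ rhoT (G.induce ({v}ᶜ : Set V)) + 1 := by
  classical
  obtain ⟨f, t, hf⟩ := (G.induce ({v}ᶜ : Set V)).exists_minPlusRep_rhoT
  obtain ⟨B, hB⟩ := exists_forall_le_add f t
  exact G.rhoT_le (Nat.succ_pos _) (hf.extendRep hB)
end

section
/- For any finite simple graph G on n ≥ 2 vertices, ρ_T(G) ≤ n − 1. -/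
namespace SimpleGraph

variable {V : Type*} (G : SimpleGraph V)

open Classical in
noncomputable def starCoord (u x : V) : ℝ :=
  if x = u then 0 else if G.Adj u x then 2 else 1

variable {G}

lemma one_le_starCoord {u x : V} (hx : x ≠ u) : 1 ≤ G.starCoord u x := by
  simp only [starCoord, if_neg hx]
  split_ifs <;> norm_num

lemma two_le_starCoord_add_of_adj {u x y : V} (hxy : G.Adj x y) :
    2 ≤ G.starCoord u x + G.starCoord u y := by
  by_cases hx : x = u
  · subst hx
    simp [starCoord, hxy, hxy.ne.symm]
  by_cases hy : y = u
  · subst hy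
    simp [starCoord, hxy.symm, hxy.ne]
  linarith [one_le_starCoord (G := G) hx, one_le_starCoord (G := G) hy]

lemma starCoord_self_add_of_not_adj {x y : V} (hxy : x ≠ y) (h : ¬G.Adj x y) :
    G.starCoord x x + G.starCoord x y = 1 := by
  simp [starCoord, hxy.symm, h]

lemma minPlusRep_starCoord {k : ℕ} (c : Fin k → V)
    (hc : ∀ x y, x ≠ y → ¬G.Adj x y → ∃ i, c i = x ∨ c i = y) :
    MinPlusRep G k (fun x i => G.starCoord (c i) x) 2 := by
  refine ⟨two_pos, fun x y hxy => ⟨fun h i => two_le_starCoord_add_of_adj h, fun h => ?_⟩⟩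
  by_contra hadj
  obtain ⟨i, hi | hi⟩ := hc x y hxy hadj
  · have : 2 ≤ G.starCoord x x + G.starCoord x y := hi ▸ h i
    linarith [starCoord_self_add_of_not_adj hxy hadj]
  · have : 2 ≤ G.starCoord y y + G.starCoord y x := add_comm (G.starCoord y x) _ ▸ hi ▸ h i
    linarith [starCoord_self_add_of_not_adj hxy.symm (mt G.adj_symm hadj)]

lemma rhoT_le_of_forall_not_adj {k : ℕ} (hk : 0 < k) (c : Fin k → V)
    (hc : ∀ x y, x ≠ y → ¬G.Adj x y → ∃ i, c i = x ∨ c i = y) : rhoT G ≤ k :=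
  Nat.sInf_le ⟨hk, _, _, minPlusRep_starCoord c hc⟩

end SimpleGraph

/-- For any finite simple graph on `n ≥ 2` vertices, `ρ_T(G) ≤ n − 1`. -/
theorem stmt_2 {V : Type*} [Fintype V] (G : SimpleGraph V) (hn : 2 ≤ Fintype.card V) :
    rhoT G ≤ Fintype.card V - 1 := by
  classical
  obtain ⟨v₀⟩ : Nonempty V := Fintype.card_pos_iff.mp (by omega)
  have hcard : Fintype.card {v : V // v ≠ v₀} = Fintype.card V - 1 := by
    simp [Fintype.card_subtype_compl]
  let e := (Fintype.equivFinOfCardEq hcard).symm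
  refine G.rhoT_le_of_forall_not_adj (by omega) (fun i => e i) fun x y hxy _ => ?_
  by_cases hx : x = v₀
  · exact ⟨e.symm ⟨y, hx ▸ hxy.symm⟩, .inr (by simp)⟩
  · exact ⟨e.symm ⟨x, hx⟩, .inl (by simp)⟩
end

section
/- Every finite simple graph G on n vertices admits a max-plus n-tropical dot product representation; in particular, the max-plus tropical dot product dimension ρ_T̂(G) is well defined and satisfies ρ_T̂(G) ≤ n. -/
/-!
Index the coordinates by the vertices and give `x` weight `2` at its own coordinate, `1` at the
coordinates of its neighbours and `0` elsewhere. With threshold `3`, a coordinate sum reaches the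
threshold only as `2 + 1`, i.e. at the coordinate of one endpoint that is a neighbour of the other.
-/

/-- A max-plus `k`-tropical dot product representation of `G` with threshold `t`:
distinct vertices `x, y` are adjacent iff `max_{1 ≤ i ≤ k} (f(x)_i + f(y)_i) ≥ t`
(equivalently, some coordinate sum is at least `t`). -/
def MaxPlusRep {V : Type*} (G : SimpleGraph V) (k : ℕ) (f : V → Fin k → ℝ) (t : ℝ) : Prop :=
  0 < t ∧ ∀ x y : V, x ≠ y → (G.Adj x y ↔ ∃ i : Fin k, t ≤ f x i + f y i)

/-- The max-plus tropical dot product dimension `ρ_T̂(G)`. -/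
noncomputable def rhoTHat {V : Type*} (G : SimpleGraph V) : ℕ :=
  sInf {k : ℕ | 0 < k ∧ ∃ (f : V → Fin k → ℝ) (t : ℝ), MaxPlusRep G k f t}

namespace SimpleGraph

variable {V : Type*} (G : SimpleGraph V) [DecidableEq V] [DecidableRel G.Adj]

def nbhdWeight (x v : V) : ℝ :=
  if x = v then 2 else if G.Adj x v then 1 else 0

variable {G}

lemma nbhdWeight_le_one_of_ne {x v : V} (h : x ≠ v) : G.nbhdWeight x v ≤ 1 := by
  simp only [nbhdWeight, if_neg h]
  split_ifs <;> norm_num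

lemma three_le_nbhdWeight_add_of_adj {x y : V} (h : G.Adj x y) :
    3 ≤ G.nbhdWeight x y + G.nbhdWeight y y := by
  simp only [nbhdWeight, h.ne, h, ↓reduceIte]
  norm_num

lemma adj_of_three_le_nbhdWeight_add {x y v : V} (hxy : x ≠ y)
    (h : 3 ≤ G.nbhdWeight x v + G.nbhdWeight y v) : G.Adj x y := by
  by_cases hx : x = v
  · subst hx
    simp only [nbhdWeight, if_neg hxy.symm, eq_self, if_true] at h
    split_ifs at h with hadj
    · exact hadj.symm
    · norm_num at h
  by_cases hy : y = v
  · subst hy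
    simp only [nbhdWeight, if_neg hxy, eq_self, if_true] at h
    split_ifs at h with hadj
    · exact hadj
    · norm_num at h
  linarith [nbhdWeight_le_one_of_ne (G := G) hx, nbhdWeight_le_one_of_ne (G := G) hy]

theorem maxPlusRep_nbhdWeight {k : ℕ} {e : Fin k → V} (he : Function.Surjective e) :
    MaxPlusRep G k (fun x i => G.nbhdWeight x (e i)) 3 := by
  refine ⟨by norm_num, fun x y hxy => ⟨fun hadj => ?_, fun ⟨i, hi⟩ => ?_⟩⟩
  · obtain ⟨i, rfl⟩ := he y
    exact ⟨i, three_le_nbhdWeight_add_of_adj hadj⟩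
  · exact adj_of_three_le_nbhdWeight_add hxy hi

end SimpleGraph

lemma rhoTHat_le {V : Type*} {G : SimpleGraph V} {k : ℕ} {f : V → Fin k → ℝ} {t : ℝ}
    (hk : 0 < k) (hf : MaxPlusRep G k f t) : rhoTHat G ≤ k :=
  Nat.sInf_le ⟨hk, f, t, hf⟩

/-- Every finite simple graph on `n` vertices admits a max-plus `n`-tropical dot product
representation; in particular `ρ_T̂(G) ≤ n`. -/
theorem stmt_3 {V : Type*} [Fintype V] [Nonempty V] (G : SimpleGraph V) :
    (∃ (f : V → Fin (Fintype.card V) → ℝ) (t : ℝ), MaxPlusRep G (Fintype.card V) f t) ∧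
      rhoTHat G ≤ Fintype.card V := by
  classical
  have hrep := SimpleGraph.maxPlusRep_nbhdWeight (G := G) (Fintype.equivFin V).symm.surjective
  exact ⟨⟨_, _, hrep⟩, rhoTHat_le Fintype.card_pos hrep⟩
end

section
/- For every finite simple graph G, the max-plus tropical dot product dimension equals the threshold dimension: ρ_T̂(G) = Θ(G). -/
/-- `G` is a threshold graph: there are vertex weights `w` and a threshold `t` such that
distinct vertices are adjacent iff the sum of their weights is at least `t`. -/
def IsThresholdGraph {V : Type*} (G : SimpleGraph V) : Prop :=
  ∃ (w : V → ℝ) (t : ℝ), ∀ x y : V, x ≠ y → (G.Adj x y ↔ t ≤ w x + w y)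

/-- The threshold dimension `Θ(G)`: the minimum number `k` of threshold graphs on the
vertex set of `G` whose union (of edge sets) is `G`. -/
noncomputable def thresholdDim {V : Type*} (G : SimpleGraph V) : ℕ :=
  sInf {k : ℕ | 0 < k ∧ ∃ H : Fin k → SimpleGraph V,
    (∀ i, IsThresholdGraph (H i)) ∧ (⨆ i, H i) = G}

/-!
A max-plus representation `f` with threshold `t` writes `G` as the union of the
`k` threshold graphs with weights `f · i` and common threshold `t`. Conversely, shifting the
weights of a threshold graph by `(1 - t) / 2` moves its threshold to `1`, so `k` threshold
graphs with arbitrary thresholds yield a max-plus representation with the positive threshold `1`.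
-/

section

variable {V : Type*}

def coordThresholdGraph {k : ℕ} (f : V → Fin k → ℝ) (t : ℝ) (i : Fin k) : SimpleGraph V :=
  SimpleGraph.fromRel fun x y => t ≤ f x i + f y i

lemma coordThresholdGraph_adj {k : ℕ} (f : V → Fin k → ℝ) (t : ℝ) (i : Fin k) {x y : V}
    (hxy : x ≠ y) : (coordThresholdGraph f t i).Adj x y ↔ t ≤ f x i + f y i := by
  rw [coordThresholdGraph, SimpleGraph.fromRel_adj, add_comm (f y i)]
  exact ⟨fun ⟨_, h⟩ => h.elim id id, fun h => ⟨hxy, .inl h⟩⟩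

lemma isThresholdGraph_coordThresholdGraph {k : ℕ} (f : V → Fin k → ℝ) (t : ℝ) (i : Fin k) :
    IsThresholdGraph (coordThresholdGraph f t i) :=
  ⟨fun x => f x i, t, fun _ _ => coordThresholdGraph_adj f t i⟩

lemma MaxPlusRep.iSup_coordThresholdGraph {G : SimpleGraph V} {k : ℕ} {f : V → Fin k → ℝ}
    {t : ℝ} (hf : MaxPlusRep G k f t) : ⨆ i, coordThresholdGraph f t i = G := by
  ext x y
  rw [SimpleGraph.iSup_adj]
  by_cases hxy : x = y
  · subst hxy
    simp only [SimpleGraph.irrefl, exists_false]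
  · simp only [coordThresholdGraph_adj f t _ hxy, hf.2 x y hxy]

lemma IsThresholdGraph.exists_weights_threshold_one {G : SimpleGraph V}
    (hG : IsThresholdGraph G) : ∃ w : V → ℝ, ∀ x y, x ≠ y → (G.Adj x y ↔ 1 ≤ w x + w y) := by
  obtain ⟨w, t, hw⟩ := hG
  refine ⟨fun x => w x + (1 - t) / 2, fun x y hxy => ?_⟩
  rw [hw x y hxy]
  constructor <;> intro h <;> linarith

lemma exists_maxPlusRep_iSup {k : ℕ} {H : Fin k → SimpleGraph V}
    (hH : ∀ i, IsThresholdGraph (H i)) : ∃ f t, MaxPlusRep (⨆ i, H i) k f t := by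
  choose w hw using fun i => (hH i).exists_weights_threshold_one
  refine ⟨fun x i => w i x, 1, one_pos, fun x y hxy => ?_⟩
  simp only [SimpleGraph.iSup_adj, hw _ x y hxy]

lemma exists_maxPlusRep_iff_exists_thresholdGraph_cover (G : SimpleGraph V) (k : ℕ) :
    (∃ f t, MaxPlusRep G k f t) ↔
      ∃ H : Fin k → SimpleGraph V, (∀ i, IsThresholdGraph (H i)) ∧ (⨆ i, H i) = G := by
  constructor
  · rintro ⟨f, t, hf⟩
    exact ⟨coordThresholdGraph f t, isThresholdGraph_coordThresholdGraph f t,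
      hf.iSup_coordThresholdGraph⟩
  · rintro ⟨H, hH, rfl⟩
    exact exists_maxPlusRep_iSup hH

end

theorem stmt_6_general {V : Type*} (G : SimpleGraph V) :
    rhoTHat G = thresholdDim G := by
  unfold rhoTHat thresholdDim
  congr 1
  ext k
  exact and_congr_right fun _ => exists_maxPlusRep_iff_exists_thresholdGraph_cover G k

/-- The max-plus tropical dot product dimension equals the threshold dimension. -/
theorem stmt_6 {V : Type*} [Fintype V] (G : SimpleGraph V) :
    rhoTHat G = thresholdDim G :=
  stmt_6_general G
end

section
/- For every finite simple graph G on n vertices with at least one edge, ρ_T̂(G) ≤ n − α(G), where α(G) is the size of a largest independent set of vertices in G. Furthermore, if G is triangle-free, then ρ_T̂(G) = n − α(G). -/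
/-- The independence number `α(G)`: the maximum size of a set of pairwise nonadjacent
vertices. -/
noncomputable def indepNum {V : Type*} [Fintype V] (G : SimpleGraph V) : ℕ :=
  sSup {n : ℕ | ∃ s : Finset V, s.card = n ∧ ∀ x ∈ s, ∀ y ∈ s, ¬ G.Adj x y}

/-!
Both bounds pass through vertex covers, the complements of independent sets, whose minimum size
is `n − α(G)`. A vertex cover `c₁, …, c_k` yields a representation with threshold `1`: coordinate
`i` gives `c_i` the value `1`, its neighbours `0` and every other vertex `-1`. Conversely, if `G` is
triangle-free and `c_i` maximises the `i`-th coordinate of a representation, the `c_i` cover every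
edge `xy`: a coordinate `i` with `f(x)_i + f(y)_i ≥ t` and `c_i ∉ {x, y}` would make `c_i`
adjacent to both `x` and `y`.
-/

theorem indepNum_eq_simpleGraph_indepNum {V : Type*} [Fintype V] (G : SimpleGraph V) :
    indepNum G = G.indepNum := by
  unfold indepNum SimpleGraph.indepNum
  congr 1
  ext n
  refine exists_congr fun s => ⟨fun ⟨hcard, hs⟩ => ⟨fun x hx y hy _ => hs x hx y hy, hcard⟩,
    fun ⟨hs, hcard⟩ => ⟨hcard, fun x hx y hy hxy => hs hx hy hxy.ne hxy⟩⟩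

theorem card_sub_indepNum_le_of_isVertexCover_range {V ι : Type*} [Fintype V] [Fintype ι]
    {G : SimpleGraph V} (c : ι → V) (hc : G.IsVertexCover (Set.range c)) :
    Fintype.card V - G.indepNum ≤ Fintype.card ι := by
  classical
  have hindep : G.IsIndepSet ↑(Finset.univ.image c)ᶜ := by
    rwa [Finset.coe_compl, Finset.coe_image, Finset.coe_univ, Set.image_univ,
      SimpleGraph.isIndepSet_compl_iff_isVertexCover]
  calc Fintype.card V - G.indepNum ≤ (Finset.univ.image c).card := by
        have := hindep.card_le_indepNum
        rw [Finset.card_compl] at this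
        omega
    _ ≤ Fintype.card ι := Finset.card_image_le

theorem exists_isVertexCover_range_fin_card_sub_indepNum {V : Type*} [Fintype V]
    (G : SimpleGraph V) :
    ∃ c : Fin (Fintype.card V - G.indepNum) → V, G.IsVertexCover (Set.range c) := by
  classical
  obtain ⟨s, hs, hcard⟩ := G.exists_isNIndepSet_indepNum
  have hW : Fintype.card ↥(sᶜ) = Fintype.card V - G.indepNum := by
    rw [Fintype.card_coe, Finset.card_compl, hcard]
  refine ⟨Subtype.val ∘ (Fintype.equivFinOfCardEq hW).symm, ?_⟩
  rw [EquivLike.range_comp, Subtype.range_coe]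
  exact_mod_cast G.isVertexCover_compl.2 hs

theorem exists_maxPlusRep_of_isVertexCover_range {V : Type*} (G : SimpleGraph V) {k : ℕ}
    (c : Fin k → V) (hc : G.IsVertexCover (Set.range c)) : ∃ f t, MaxPlusRep G k f t := by
  classical
  refine ⟨fun v i => if v = c i then 1 else if G.Adj v (c i) then 0 else -1, 1, one_pos,
    fun x y hxy => ⟨fun hadj => ?_, fun ⟨i, hi⟩ => ?_⟩⟩
  · rcases hc hadj with ⟨i, rfl⟩ | ⟨i, rfl⟩
    · exact ⟨i, by simp [hxy.symm, hadj.symm]⟩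
    · exact ⟨i, by simp [hxy, hadj]⟩
  · rcases eq_or_ne x (c i) with rfl | hx
    · by_contra h
      norm_num [hxy.symm, G.adj_comm y, h] at hi
    rcases eq_or_ne y (c i) with rfl | hy
    · by_contra h
      norm_num [hxy, h] at hi
    have hnonpos : ∀ v, v ≠ c i →
        (if v = c i then 1 else if G.Adj v (c i) then 0 else -1 : ℝ) ≤ 0 := by
      intro v hv
      rw [if_neg hv]
      split_ifs <;> norm_num
    linarith [hnonpos x hx, hnonpos y hy]

theorem MaxPlusRep.exists_isVertexCover_range {V : Type*} [Finite V] [Nonempty V]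
    {G : SimpleGraph V} (hG : G.CliqueFree 3) {k : ℕ} {f : V → Fin k → ℝ} {t : ℝ}
    (hf : MaxPlusRep G k f t) : ∃ c : Fin k → V, G.IsVertexCover (Set.range c) := by
  classical
  choose c hc using fun i : Fin k => Finite.exists_max (f · i)
  refine ⟨c, fun x y hxy => ?_⟩
  by_contra! hxyc
  obtain ⟨i, hi⟩ := (hf.2 x y hxy.ne).1 hxy
  have hcx : c i ≠ x := fun h => hxyc.1 ⟨i, h⟩
  have hcy : c i ≠ y := fun h => hxyc.2 ⟨i, h⟩
  have hxc : G.Adj x (c i) := (hf.2 _ _ hcx.symm).2 ⟨i, by linarith [hc i y]⟩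
  have hyc : G.Adj y (c i) := (hf.2 _ _ hcy.symm).2 ⟨i, by linarith [hc i x]⟩
  exact hG {x, y, c i} (SimpleGraph.is3Clique_triple_iff.2 ⟨hxy, hxc, hyc⟩)

theorem pos_of_isVertexCover_range {V : Type*} {G : SimpleGraph V} (hedge : ∃ x y, G.Adj x y)
    {k : ℕ} (c : Fin k → V) (hc : G.IsVertexCover (Set.range c)) : 0 < k := by
  obtain ⟨x, y, hxy⟩ := hedge
  obtain ⟨i, -⟩ | ⟨i, -⟩ := hc hxy <;> exact i.pos

/-- For a finite graph on `n` vertices with at least one edge, `ρ_T̂(G) ≤ n − α(G)`;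
moreover, if `G` is triangle-free, then `ρ_T̂(G) = n − α(G)`. -/
theorem stmt_7 {V : Type*} [Fintype V] (G : SimpleGraph V) (hedge : ∃ x y, G.Adj x y) :
    rhoTHat G ≤ Fintype.card V - indepNum G ∧
      (G.CliqueFree 3 → rhoTHat G = Fintype.card V - indepNum G) := by
  obtain ⟨c, hc⟩ := exists_isVertexCover_range_fin_card_sub_indepNum G
  rw [indepNum_eq_simpleGraph_indepNum]
  have hmem : Fintype.card V - G.indepNum ∈ {k | 0 < k ∧ ∃ f t, MaxPlusRep G k f t} :=
    ⟨pos_of_isVertexCover_range hedge c hc, exists_maxPlusRep_of_isVertexCover_range G c hc⟩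
  have hle : rhoTHat G ≤ Fintype.card V - G.indepNum := Nat.sInf_le hmem
  refine ⟨hle, fun hG => hle.antisymm ?_⟩
  obtain ⟨-, f, t, hf⟩ := Nat.sInf_mem ⟨_, hmem⟩
  obtain ⟨x, -⟩ := hedge
  have : Nonempty V := ⟨x⟩
  obtain ⟨c', hc'⟩ := hf.exists_isVertexCover_range hG
  exact (card_sub_indepNum_le_of_isVertexCover_range c' hc').trans_eq (Fintype.card_fin _)
end

section
/- For every finite simple graph G, ρ_T(G) = ρ_T̂(Ḡ), where Ḡ is the complement of G; equivalently, Θ̂(G) = Θ(Ḡ). -/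
/-- The threshold graph intersection number `Θ̂(G)`: the minimum number `k` of threshold
graphs on the vertex set of `G` whose intersection (of edge sets) is `G`. -/
noncomputable def thresholdIntDim {V : Type*} (G : SimpleGraph V) : ℕ :=
  sInf {k : ℕ | 0 < k ∧ ∃ H : Fin k → SimpleGraph V,
    (∀ i, IsThresholdGraph (H i)) ∧ (⨅ i, H i) = G}

/-! The finitely many sums `w x + w y` below `t` all lie below some `u < t`. Replacing each
weight `w` by `t - w` and the threshold `t` by `2t - u > t` therefore turns "`w x + w y < t`" into
"the new sum reaches the new threshold". This passes from a graph to its complement; since the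
negation of a conjunction over coordinates is a disjunction, it also exchanges min-plus and
max-plus representations, and intersections and unions of threshold graphs. -/

theorem Finite.exists_lt_forall_le_of_lt {α β : Type*} [Finite α] [LinearOrder β] [NoMinOrder β]
    (s : α → β) (t : β) : ∃ u < t, ∀ a, s a < t → s a ≤ u := by
  cases isEmpty_or_nonempty {a // s a < t} with
  | inl hempty =>
    obtain ⟨u, hu⟩ := exists_lt t
    exact ⟨u, hu, fun a ha => (hempty.false ⟨a, ha⟩).elim⟩
  | inr _ =>
    obtain ⟨b, hb⟩ := Finite.exists_max fun a : {a // s a < t} => s a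
    exact ⟨s b, b.2, fun a ha => hb ⟨a, ha⟩⟩

theorem exists_gt_forall_add_lt_iff_le_sub_add_sub {α : Type*} [Finite α] (w : α → ℝ) (t : ℝ) :
    ∃ t' > t, ∀ x y, w x + w y < t ↔ t' ≤ (t - w x) + (t - w y) := by
  obtain ⟨u, hut, hu⟩ := Finite.exists_lt_forall_le_of_lt (fun p : α × α => w p.1 + w p.2) t
  refine ⟨2 * t - u, by linarith, fun x y => ⟨fun h => ?_, fun h => by linarith⟩⟩
  linarith [hu (x, y) h]

section

variable {V : Type*} [Finite V] {G : SimpleGraph V} {ι : Type*}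

theorem exists_pos_forall_coord_sum_lt_iff [Finite ι] {f : V → ι → ℝ} {t : ℝ} (ht : 0 < t) :
    ∃ (g : V → ι → ℝ) (t' : ℝ), 0 < t' ∧
      ∀ x y i, f x i + f y i < t ↔ t' ≤ g x i + g y i := by
  obtain ⟨t', htt', h⟩ := exists_gt_forall_add_lt_iff_le_sub_add_sub (fun p : V × ι => f p.1 p.2) t
  exact ⟨fun v i => t - f v i, t', by linarith, fun x y i => h (x, i) (y, i)⟩

theorem MinPlusRep.exists_maxPlusRep_compl {k : ℕ} {f : V → Fin k → ℝ} {t : ℝ}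
    (h : MinPlusRep G k f t) : ∃ g t', MaxPlusRep Gᶜ k g t' := by
  obtain ⟨ht, hadj⟩ := h
  obtain ⟨g, t', ht', hg⟩ := exists_pos_forall_coord_sum_lt_iff (f := f) ht
  refine ⟨g, t', ht', fun x y hxy => ?_⟩
  simp only [SimpleGraph.compl_adj, hadj x y hxy, ne_eq, hxy, not_false_eq_true, true_and,
    not_forall, not_le, hg]

theorem MaxPlusRep.exists_minPlusRep_compl {k : ℕ} {f : V → Fin k → ℝ} {t : ℝ}
    (h : MaxPlusRep G k f t) : ∃ g t', MinPlusRep Gᶜ k g t' := by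
  obtain ⟨ht, hadj⟩ := h
  obtain ⟨g, t', ht', hg⟩ := exists_pos_forall_coord_sum_lt_iff (f := f) ht
  refine ⟨g, t', ht', fun x y hxy => ?_⟩
  simp only [SimpleGraph.compl_adj, hadj x y hxy, ne_eq, hxy, not_false_eq_true, true_and,
    not_exists, not_le, hg]

theorem exists_minPlusRep_iff_exists_maxPlusRep_compl {k : ℕ} :
    (∃ f t, MinPlusRep G k f t) ↔ ∃ f t, MaxPlusRep Gᶜ k f t :=
  ⟨fun ⟨_, _, h⟩ => h.exists_maxPlusRep_compl,
    fun ⟨_, _, h⟩ => compl_compl G ▸ h.exists_minPlusRep_compl⟩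

theorem IsThresholdGraph.compl {H : SimpleGraph V} (h : IsThresholdGraph H) :
    IsThresholdGraph Hᶜ := by
  obtain ⟨w, t, hw⟩ := h
  obtain ⟨t', -, h⟩ := exists_gt_forall_add_lt_iff_le_sub_add_sub w t
  refine ⟨fun v => t - w v, t', fun x y hxy => ?_⟩
  simp only [SimpleGraph.compl_adj, hw x y hxy, ne_eq, hxy, not_false_eq_true, true_and,
    not_le, h]

theorem exists_threshold_iInf_iff_exists_threshold_iSup_compl :
    (∃ H : ι → SimpleGraph V, (∀ i, IsThresholdGraph (H i)) ∧ ⨅ i, H i = G) ↔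
      ∃ H : ι → SimpleGraph V, (∀ i, IsThresholdGraph (H i)) ∧ ⨆ i, H i = Gᶜ := by
  constructor
  · rintro ⟨H, hH, rfl⟩
    exact ⟨fun i => (H i)ᶜ, fun i => (hH i).compl, (compl_iInf).symm⟩
  · rintro ⟨H, hH, hG⟩
    refine ⟨fun i => (H i)ᶜ, fun i => (hH i).compl, ?_⟩
    rw [← compl_iSup, hG, compl_compl]

end

/-- `ρ_T(G) = ρ_T̂(Ḡ)`; equivalently `Θ̂(G) = Θ(Ḡ)`. -/
theorem stmt_9 {V : Type*} [Fintype V] (G : SimpleGraph V) :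
    rhoT G = rhoTHat Gᶜ ∧ thresholdIntDim G = thresholdDim Gᶜ := by
  constructor
  · unfold rhoT rhoTHat
    simp_rw [exists_minPlusRep_iff_exists_maxPlusRep_compl]
  · unfold thresholdIntDim thresholdDim
    simp_rw [exists_threshold_iInf_iff_exists_threshold_iSup_compl]
end

section
/- The 4-cycle C_4 satisfies ρ_T(C_4) = 2. -/
variable {V : Type*} {G : SimpleGraph V}

theorem rhoT_eq {k : ℕ} (hk : 0 < k) (hrep : ∃ f t, MinPlusRep G k f t)
    (hlt : ∀ m, 0 < m → m < k → ¬ ∃ f t, MinPlusRep G m f t) : rhoT G = k :=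
  le_antisymm (Nat.sInf_le ⟨hk, hrep⟩) <|
    le_csInf ⟨k, hk, hrep⟩ fun m ⟨hm, hmrep⟩ => not_lt.1 fun hmk => hlt m hm hmk hmrep

theorem minPlusRep_two_of_adj_iff_ne {c : V → Bool} (hc : ∀ x y, G.Adj x y ↔ c x ≠ c y) :
    MinPlusRep G 2 (fun x => bif c x then ![0, 1] else ![1, 0]) 1 := by
  refine ⟨one_pos, fun x y _ => ?_⟩
  rw [hc, Fin.forall_fin_two]
  beta_reduce
  cases c x <;> cases c y <;> norm_num

theorem MinPlusRep.adj_or_adj_of_adj_of_adj {f : V → Fin 1 → ℝ} {t : ℝ}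
    (hf : MinPlusRep G 1 f t) {a b c d : V} (hab : G.Adj a b) (hcd : G.Adj c d)
    (hac : a ≠ c) (hbd : b ≠ d) : G.Adj a c ∨ G.Adj b d := by
  have hadj : ∀ {x y}, x ≠ y → (G.Adj x y ↔ t ≤ f x 0 + f y 0) := fun hxy => by
    rw [hf.2 _ _ hxy, Fin.forall_fin_one]
  rw [hadj hac, hadj hbd]
  rw [hadj hab.ne] at hab
  rw [hadj hcd.ne] at hcd
  by_contra! h
  linarith [h.1, h.2]

theorem cycleGraph_four_adj_iff (u v : Fin 4) :
    (SimpleGraph.cycleGraph 4).Adj u v ↔ Nat.bodd u ≠ Nat.bodd v := by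
  rw [SimpleGraph.cycleGraph_adj]
  revert u v
  decide

/-- The 4-cycle satisfies `ρ_T(C_4) = 2`. -/
theorem stmt_11 : rhoT (SimpleGraph.cycleGraph 4) = 2 := by
  refine rhoT_eq two_pos ⟨_, _, minPlusRep_two_of_adj_iff_ne cycleGraph_four_adj_iff⟩ ?_
  rintro m hm hm2 ⟨f, t, hf⟩
  obtain rfl : m = 1 := by omega
  have hadj := cycleGraph_four_adj_iff
  have := hf.adj_or_adj_of_adj_of_adj (a := 0) (b := 1) (c := 2) (d := 3)
    ((hadj _ _).2 (by decide)) ((hadj _ _).2 (by decide)) (by decide) (by decide)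
  simp only [hadj] at this
  exact absurd this (by decide)
end

section
/- The path P_4 on 4 vertices satisfies ρ_T(P_4) = 2 and ρ_T̂(P_4) = 2. -/
lemma p4_min_rep2 : MinPlusRep (SimpleGraph.pathGraph 4) 2
    ![![12,8],![12,14],![20,7],![4,20]] 20 := by
  refine ⟨by norm_num, ?_⟩
  intro x y hxy
  fin_cases x <;> fin_cases y <;>
    simp_all [SimpleGraph.pathGraph_adj, Fin.forall_fin_two,
      show ((3:Fin 4):ℕ) = 3 from rfl, show ((2:Fin 4):ℕ) = 2 from rfl,
      show ((1:Fin 4):ℕ) = 1 from rfl, show ((0:Fin 4):ℕ) = 0 from rfl] <;>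
    norm_num

lemma p4_max_rep2 : MaxPlusRep (SimpleGraph.pathGraph 4) 2
    ![![5,-100],![5,2],![-100,10],![-100,2]] 10 := by
  refine ⟨by norm_num, ?_⟩
  intro x y hxy
  fin_cases x <;> fin_cases y <;>
    simp_all [SimpleGraph.pathGraph_adj, Fin.exists_fin_two,
      show ((3:Fin 4):ℕ) = 3 from rfl, show ((2:Fin 4):ℕ) = 2 from rfl,
      show ((1:Fin 4):ℕ) = 1 from rfl, show ((0:Fin 4):ℕ) = 0 from rfl] <;>
    norm_num

lemma p4_adj01 : (SimpleGraph.pathGraph 4).Adj 0 1 := by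
  simp [SimpleGraph.pathGraph_adj]
lemma p4_adj23 : (SimpleGraph.pathGraph 4).Adj 2 3 := by
  simp [SimpleGraph.pathGraph_adj, show ((3:Fin 4):ℕ) = 3 from rfl,
    show ((2:Fin 4):ℕ) = 2 from rfl]
lemma p4_nadj02 : ¬ (SimpleGraph.pathGraph 4).Adj 0 2 := by
  simp [SimpleGraph.pathGraph_adj, show ((2:Fin 4):ℕ) = 2 from rfl]
lemma p4_nadj13 : ¬ (SimpleGraph.pathGraph 4).Adj 1 3 := by
  simp [SimpleGraph.pathGraph_adj, show ((3:Fin 4):ℕ) = 3 from rfl,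
    show ((1:Fin 4):ℕ) = 1 from rfl]

lemma p4_no_min1 (f : Fin 4 → Fin 1 → ℝ) (t : ℝ) :
    ¬ MinPlusRep (SimpleGraph.pathGraph 4) 1 f t := by
  rintro ⟨-, h⟩
  have h01 := (h 0 1 (by decide)).mp p4_adj01 0
  have h23 := (h 2 3 (by decide)).mp p4_adj23 0
  have h02 : ¬ ∀ i : Fin 1, t ≤ f 0 i + f 2 i :=
    fun hc => p4_nadj02 ((h 0 2 (by decide)).mpr hc)
  have h13 : ¬ ∀ i : Fin 1, t ≤ f 1 i + f 3 i :=
    fun hc => p4_nadj13 ((h 1 3 (by decide)).mpr hc)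
  rw [not_forall] at h02 h13
  obtain ⟨i, hi⟩ := h02
  obtain ⟨j, hj⟩ := h13
  have hi0 : i = 0 := Subsingleton.elim _ _
  have hj0 : j = 0 := Subsingleton.elim _ _
  subst hi0; subst hj0
  push_neg at hi hj
  linarith

lemma p4_no_max1 (f : Fin 4 → Fin 1 → ℝ) (t : ℝ) :
    ¬ MaxPlusRep (SimpleGraph.pathGraph 4) 1 f t := by
  rintro ⟨-, h⟩
  obtain ⟨i, h01⟩ := (h 0 1 (by decide)).mp p4_adj01
  obtain ⟨j, h23⟩ := (h 2 3 (by decide)).mp p4_adj23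
  have hi0 : i = 0 := Subsingleton.elim _ _
  have hj0 : j = 0 := Subsingleton.elim _ _
  subst hi0; subst hj0
  have h02 : ¬ ∃ i : Fin 1, t ≤ f 0 i + f 2 i :=
    fun hc => p4_nadj02 ((h 0 2 (by decide)).mpr hc)
  have h13 : ¬ ∃ i : Fin 1, t ≤ f 1 i + f 3 i :=
    fun hc => p4_nadj13 ((h 1 3 (by decide)).mpr hc)
  push_neg at h02 h13
  have := h02 0
  have := h13 0
  linarith

/-- The path on 4 vertices satisfies `ρ_T(P_4) = 2` and `ρ_T̂(P_4) = 2`. -/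
theorem stmt_12 :
    rhoT (SimpleGraph.pathGraph 4) = 2 ∧ rhoTHat (SimpleGraph.pathGraph 4) = 2 := by
  constructor
  · have h2 : (2 : ℕ) ∈ {k : ℕ | 0 < k ∧ ∃ (f : Fin 4 → Fin k → ℝ) (t : ℝ),
        MinPlusRep (SimpleGraph.pathGraph 4) k f t} :=
      ⟨by norm_num, _, _, p4_min_rep2⟩
    refine le_antisymm (Nat.sInf_le h2) (le_csInf ⟨2, h2⟩ ?_)
    rintro k ⟨hk0, f, t, hrep⟩
    rcases Nat.lt_or_ge k 2 with hk | hk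
    · interval_cases k
      · exact absurd hrep (p4_no_min1 f t)
    · exact hk
  · have h2 : (2 : ℕ) ∈ {k : ℕ | 0 < k ∧ ∃ (f : Fin 4 → Fin k → ℝ) (t : ℝ),
        MaxPlusRep (SimpleGraph.pathGraph 4) k f t} :=
      ⟨by norm_num, _, _, p4_max_rep2⟩
    refine le_antisymm (Nat.sInf_le h2) (le_csInf ⟨2, h2⟩ ?_)
    rintro k ⟨hk0, f, t, hrep⟩
    rcases Nat.lt_or_ge k 2 with hk | hk
    · interval_cases k
      · exact absurd hrep (p4_no_max1 f t)
    · exact hk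
end

section
/- Let G be a finite simple graph on n ≥ 3 vertices, and suppose G has an induced subgraph on k vertices that is a threshold graph. Then ρ_T(G) ≤ n − k + 1. -/
/-!
Use threshold `1` and one coordinate for each vertex `v` outside `s`, plus one more. In the
coordinate of `v`, the vertex `v` gets `1/4`, its neighbours `1` and all other vertices `1/2`,
so it only rejects the non-edges at `v`. In the extra coordinate, the vertices of `s` get their
threshold weights (shifted to threshold `1`) and the others a weight so large that every pair
meeting them passes, so it only rejects the non-edges inside `s`.
-/

section

variable {V : Type*}

lemma rhoT_le_card_of_adj_iff (G : SimpleGraph V) {ι : Type*} [Fintype ι] [Nonempty ι]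
    (f : V → ι → ℝ) {t : ℝ} (ht : 0 < t)
    (hf : ∀ x y, x ≠ y → (G.Adj x y ↔ ∀ i, t ≤ f x i + f y i)) :
    rhoT G ≤ Fintype.card ι := by
  let e := (Fintype.equivFin ι).symm
  refine Nat.sInf_le ⟨Fintype.card_pos, fun x j => f x (e j), t, ht, fun x y hxy => ?_⟩
  rw [hf x y hxy, ← e.forall_congr_right]

lemma IsThresholdGraph.exists_adj_iff_one_le {G : SimpleGraph V} (h : IsThresholdGraph G) :
    ∃ w : V → ℝ, ∀ x y, x ≠ y → (G.Adj x y ↔ 1 ≤ w x + w y) := by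
  obtain ⟨w, t, hw⟩ := h
  refine ⟨fun x => w x + (1 - t) / 2, fun x y hxy => ?_⟩
  rw [hw x y hxy]
  constructor <;> intro <;> linarith

lemma exists_one_le_add_iff_of_isThresholdGraph_induce (G : SimpleGraph V) (s : Set V)
    [Finite s] (h : IsThresholdGraph (G.induce s)) :
    ∃ c : V → ℝ, ∀ x y, x ≠ y → (1 ≤ c x + c y ↔ (x ∈ s → y ∈ s → G.Adj x y)) := by
  classical
  obtain ⟨w, hw⟩ := h.exists_adj_iff_one_le
  obtain ⟨M, hM⟩ := (Set.finite_range fun y : s => 1 - w y).bddAbove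
  have hMw : ∀ y : s, 1 ≤ max M 1 + w y := fun y => by
    have := hM ⟨y, rfl⟩
    have := le_max_left M 1
    linarith
  refine ⟨fun x => if hx : x ∈ s then w ⟨x, hx⟩ else max M 1, fun x y hxy => ?_⟩
  by_cases hx : x ∈ s <;> by_cases hy : y ∈ s
  · have hne : (⟨x, hx⟩ : s) ≠ ⟨y, hy⟩ := by simpa using hxy
    simpa [hx, hy] using (hw _ _ hne).symm
  · simpa [hx, hy, add_comm] using hMw ⟨x, hx⟩
  · simpa [hx, hy] using hMw ⟨y, hy⟩
  · simp only [hx, hy, dite_false, false_imp_iff, iff_true]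
    linarith [le_max_right M 1]

noncomputable def neighborCoord (G : SimpleGraph V) [DecidableEq V] [DecidableRel G.Adj] (v x : V) : ℝ :=
  if x = v then 1 / 4 else if G.Adj x v then 1 else 1 / 2

lemma one_le_neighborCoord_add_iff (G : SimpleGraph V) [DecidableEq V] [DecidableRel G.Adj]
    (v : V) {x y : V} (hxy : x ≠ y) :
    1 ≤ neighborCoord G v x + neighborCoord G v y ↔ (v = x ∨ v = y → G.Adj x y) := by
  unfold neighborCoord
  by_cases hx : x = v <;> by_cases hy : y = v
  · exact absurd (hx.trans hy.symm) hxy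
  · subst hx; by_cases h : G.Adj y x <;> norm_num [hy, Ne.symm hy, h, G.adj_comm x y]
  · subst hy; by_cases h : G.Adj x y <;> norm_num [hx, Ne.symm hx, h]
  · simp only [hx, hy, if_false, Ne.symm hx, Ne.symm hy, or_self, false_imp_iff, iff_true]
    split_ifs <;> norm_num

end

theorem stmt_13_general {V : Type*} [Fintype V] (G : SimpleGraph V)
    (s : Finset V) (hthr : IsThresholdGraph (G.induce (s : Set V))) :
    rhoT G ≤ Fintype.card V - s.card + 1 := by
  classical
  obtain ⟨c, hc⟩ := exists_one_le_add_iff_of_isThresholdGraph_induce G _ hthr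
  let f : V → Option (sᶜ : Finset V) → ℝ := fun x i => i.elim (c x) (neighborCoord G · x)
  have hf : ∀ x y, x ≠ y → (G.Adj x y ↔ ∀ i, 1 ≤ f x i + f y i) := by
    intro x y hxy
    simp only [f, Option.forall, Option.elim, hc x y hxy, one_le_neighborCoord_add_iff G _ hxy]
    refine ⟨fun hadj => ⟨fun _ _ => hadj, fun _ _ => hadj⟩, fun ⟨hs, hsc⟩ => ?_⟩
    by_cases hx : x ∈ s
    · by_cases hy : y ∈ s
      · exact hs hx hy
      · exact hsc ⟨y, by simpa using hy⟩ (Or.inr rfl)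
    · exact hsc ⟨x, by simpa using hx⟩ (Or.inl rfl)
  calc rhoT G ≤ Fintype.card (Option (sᶜ : Finset V)) := rhoT_le_card_of_adj_iff G f one_pos hf
    _ = Fintype.card V - s.card + 1 := by
      rw [Fintype.card_option, Fintype.card_coe, Finset.card_compl]

/-- If `G` has `n ≥ 3` vertices and an induced subgraph on `k` vertices that is a
threshold graph, then `ρ_T(G) ≤ n − k + 1`. -/
theorem stmt_13 {V : Type*} [Fintype V] (G : SimpleGraph V) (hn : 3 ≤ Fintype.card V)
    (s : Finset V) (hthr : IsThresholdGraph (G.induce (s : Set V))) :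
    rhoT G ≤ Fintype.card V - s.card + 1 :=
  stmt_13_general G s hthr
end

section
/- For any finite simple graph G and any complete graph K_m, the join satisfies ρ_T(G ∨ K_m) = ρ_T(G), where the join G ∨ K_m is obtained from the disjoint union of G and K_m by adding all edges between vertices of G and vertices of K_m. -/
/-- The join of two graphs on disjoint vertex sets: their disjoint union together with
all edges joining a vertex of the first graph to a vertex of the second. -/
def graphJoin {V W : Type*} (G : SimpleGraph V) (H : SimpleGraph W) :
    SimpleGraph (V ⊕ W) :=
  SimpleGraph.fromRel (fun x y =>
    match x, y with
    | Sum.inl a, Sum.inl b => G.Adj a b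
    | Sum.inr a, Sum.inr b => H.Adj a b
    | Sum.inl _, Sum.inr _ => True
    | Sum.inr _, Sum.inl _ => False)

/-!
A representation of `G ∨ K_m` restricts to one of `G`. Conversely, a representation `f` of `G`
with threshold `t` extends to `G ∨ K_m` by giving every vertex of `K_m` the constant vector
`(M, …, M)`, where `M ≥ t` is large enough that `M + f(v)_i ≥ t` for all of the finitely many
`v, i`: such a vertex then meets every other vertex in every coordinate.
-/

namespace graphJoin

variable {V W : Type*} (G : SimpleGraph V) (H : SimpleGraph W)

@[simp]
lemma adj_inl_inl (x y : V) : (graphJoin G H).Adj (.inl x) (.inl y) ↔ G.Adj x y := by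
  simp only [graphJoin, SimpleGraph.fromRel_adj, ne_eq, Sum.inl.injEq]
  exact ⟨fun ⟨_, h⟩ => h.elim id G.adj_symm, fun h => ⟨h.ne, .inl h⟩⟩

@[simp]
lemma adj_inr_inr (x y : W) : (graphJoin G H).Adj (.inr x) (.inr y) ↔ H.Adj x y := by
  simp only [graphJoin, SimpleGraph.fromRel_adj, ne_eq, Sum.inr.injEq]
  exact ⟨fun ⟨_, h⟩ => h.elim id H.adj_symm, fun h => ⟨h.ne, .inl h⟩⟩

@[simp]
lemma adj_inl_inr (x : V) (y : W) : (graphJoin G H).Adj (.inl x) (.inr y) := by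
  simp [graphJoin]

@[simp]
lemma adj_inr_inl (x : W) (y : V) : (graphJoin G H).Adj (.inr x) (.inl y) :=
  (adj_inl_inr G H y x).symm

end graphJoin

namespace MinPlusRep

variable {V W : Type*} {G : SimpleGraph V} {k : ℕ} {t : ℝ}

lemma comp_inl {H : SimpleGraph W} {f : V ⊕ W → Fin k → ℝ}
    (hf : MinPlusRep (graphJoin G H) k f t) : MinPlusRep G k (f ∘ Sum.inl) t :=
  ⟨hf.1, fun x y hxy => by
    simpa using hf.2 (.inl x) (.inl y) (Sum.inl_injective.ne hxy)⟩

lemma exists_cone_value [Finite V] {f : V → Fin k → ℝ} (ht : 0 < t) :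
    ∃ M : ℝ, t ≤ M + M ∧ ∀ v i, t ≤ M + f v i := by
  obtain ⟨C, hC⟩ := (Set.finite_range fun p : V × Fin k => t - f p.1 p.2).bddAbove
  refine ⟨max t C, by linarith [le_max_left t C], fun v i => ?_⟩
  have := hC ⟨(v, i), rfl⟩
  linarith [le_max_right t C]

lemma join_top [Finite V] {f : V → Fin k → ℝ} (hf : MinPlusRep G k f t) :
    ∃ g : V ⊕ W → Fin k → ℝ, MinPlusRep (graphJoin G (⊤ : SimpleGraph W)) k g t := by
  obtain ⟨M, hMM, hM⟩ := exists_cone_value (f := f) hf.1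
  refine ⟨Sum.elim f fun _ _ => M, hf.1, ?_⟩
  rintro (x | x) (y | y) hxy
  · simpa using hf.2 x y (by simpa using hxy)
  · simpa [add_comm] using hM x
  · simpa using hM y
  · simpa [hMM] using hxy

end MinPlusRep

/-- Joining a complete graph to `G` does not change the min-plus tropical dot product
dimension: `ρ_T(G ∨ K_m) = ρ_T(G)`. -/
theorem stmt_14 {V : Type*} [Fintype V] (G : SimpleGraph V) (m : ℕ) :
    rhoT (graphJoin G (⊤ : SimpleGraph (Fin m))) = rhoT G := by
  unfold rhoT
  congr 1
  ext k
  refine and_congr_right fun _ => ⟨?_, ?_⟩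
  · rintro ⟨f, t, hf⟩
    exact ⟨_, t, hf.comp_inl⟩
  · rintro ⟨f, t, hf⟩
    exact ⟨_, t, hf.join_top.choose_spec⟩
end

section
/- If G is a complete k-partite graph in which every partite set has size greater than 1, then ρ_T(G) = k. -/
namespace MinPlusRep

variable {V : Type*} {G : SimpleGraph V} {m : ℕ} {f : V → Fin m → ℝ} {t : ℝ}

theorem le_add_of_adj (hrep : MinPlusRep G m f t) {x y : V} (hxy : G.Adj x y) (i : Fin m) :
    t ≤ f x i + f y i :=
  (hrep.2 x y hxy.ne).mp hxy i

theorem exists_add_lt_of_not_adj (hrep : MinPlusRep G m f t) {x y : V} (hne : x ≠ y)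
    (hxy : ¬G.Adj x y) : ∃ i, f x i + f y i < t := by
  by_contra! h
  exact hxy ((hrep.2 x y hne).mpr h)

end MinPlusRep

section CompleteMultipartite

variable {V : Type*} {G : SimpleGraph V} {k : ℕ} {P : V → Fin k}

theorem minPlusRep_partIndicator (hadj : ∀ x y : V, G.Adj x y ↔ P x ≠ P y) :
    MinPlusRep G k (fun x i => if P x = i then 0 else 1) 1 := by
  refine ⟨one_pos, fun x y _ => ?_⟩
  rw [hadj]
  constructor
  · intro hne i
    by_cases hx : P x = i
    · have hy : P y ≠ i := fun hy => hne (hx.trans hy.symm)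
      simp [hx, hy]
    · by_cases hy : P y = i <;> simp [hx, hy]
  · intro h heq
    have := h (P y)
    simp only [heq, if_true] at this
    linarith

theorem le_dim_of_minPlusRep (hadj : ∀ x y : V, G.Adj x y ↔ P x ≠ P y)
    (hpair : ∀ j, ∃ x y, x ≠ y ∧ P x = j ∧ P y = j) {m : ℕ} {f : V → Fin m → ℝ} {t : ℝ}
    (hrep : MinPlusRep G m f t) : k ≤ m := by
  choose X Y hXY hX hY using hpair
  have hbad : ∀ j, ∃ i, f (X j) i + f (Y j) i < t := fun j =>
    hrep.exists_add_lt_of_not_adj (hXY j) (by simp [hadj, hX, hY])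
  choose g hg using hbad
  have hg_inj : Function.Injective g := by
    intro j j' hgj
    by_contra hjj'
    have hx := hrep.le_add_of_adj (x := X j) (y := X j') (by simpa [hadj, hX] using hjj') (g j)
    have hy := hrep.le_add_of_adj (x := Y j) (y := Y j') (by simpa [hadj, hY] using hjj') (g j)
    have hj' := hg j'
    rw [← hgj] at hj'
    linarith [hg j]
  simpa using Fintype.card_le_of_injective g hg_inj

end CompleteMultipartite

/-- If `G` is a complete `k`-partite graph all of whose parts have size greater than 1,
then `ρ_T(G) = k`. -/
theorem stmt_16 {V : Type*} [Fintype V] [Nonempty V] (G : SimpleGraph V) (k : ℕ)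
    (P : V → Fin k) (hparts : ∀ i : Fin k, 1 < Fintype.card {x : V // P x = i})
    (hadj : ∀ x y : V, G.Adj x y ↔ P x ≠ P y) :
    rhoT G = k := by
  have hpair : ∀ j, ∃ x y, x ≠ y ∧ P x = j ∧ P y = j := fun j => by
    obtain ⟨⟨x, hx⟩, ⟨y, hy⟩, hne⟩ := Fintype.one_lt_card_iff.mp (hparts j)
    exact ⟨x, y, fun h => hne (Subtype.ext h), hx, hy⟩
  have hmem : k ∈ {k : ℕ | 0 < k ∧ ∃ (f : V → Fin k → ℝ) (t : ℝ), MinPlusRep G k f t} :=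
    ⟨(P (Classical.arbitrary V)).pos, _, _, minPlusRep_partIndicator hadj⟩
  refine le_antisymm (Nat.sInf_le hmem) (le_csInf ⟨k, hmem⟩ ?_)
  rintro m ⟨-, f, t, hrep⟩
  exact le_dim_of_minPlusRep hadj hpair hrep
end

section
/- For every n ≥ 3, the cycle C_n on n vertices satisfies ρ_T(C_n) ≤ 3. Moreover, there exists a graph G with ρ_T(G) ≠ ρ_T̂(G): the path P_6 on 6 vertices satisfies ρ_T(P_6) = 2 while ρ_T̂(P_6) = 3. -/
/-!
In a single coordinate the min-plus and max-plus conditions agree, and if two edges `ab`, `cd`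
reach the threshold in the same coordinate then so does `ac` or `bd`, because the four sums add
up to the same total in two ways. Hence a max-plus representation needs a separate coordinate for
each edge of an induced matching, giving `ρ_T̂(P_n) ≥ ⌊n/2⌋` and, for `n ≥ 4`, `ρ_T(P_n) ≥ 2`.

Conversely, a vertex cover `c` yields a max-plus representation with the star of `c i` in
coordinate `i`, and the odd vertices of `P_n` form such a cover. The path has the min-plus
representation `a ↦ (1 + z a, 1 - z a)` with `z a = (-1)^a a`, since `a` and `b` are adjacent
iff `|z a + z b| ≤ 1`. Deleting vertex `0` from `C_n` leaves a path, and putting a vertex back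
costs one extra coordinate.
-/

open SimpleGraph

section

variable {V : Type*} {G : SimpleGraph V} {k : ℕ} {f : V → Fin k → ℝ} {t : ℝ}

theorem rhoT_eq_of_minPlusRep (hk : 0 < k) (h : MinPlusRep G k f t)
    (hmin : ∀ m g s, 0 < m → MinPlusRep G m g s → k ≤ m) : rhoT G = k :=
  IsLeast.csInf_eq ⟨⟨hk, f, t, h⟩, fun _ ⟨hm, g, s, hg⟩ => hmin _ g s hm hg⟩

theorem rhoTHat_eq_of_maxPlusRep (hk : 0 < k) (h : MaxPlusRep G k f t)
    (hmin : ∀ m g s, 0 < m → MaxPlusRep G m g s → k ≤ m) : rhoTHat G = k :=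
  IsLeast.csInf_eq ⟨⟨hk, f, t, h⟩, fun _ ⟨hm, g, s, hg⟩ => hmin _ g s hm hg⟩

theorem minPlusRep_one_iff_maxPlusRep_one {f : V → Fin 1 → ℝ} :
    MinPlusRep G 1 f t ↔ MaxPlusRep G 1 f t := by
  simp only [MinPlusRep, MaxPlusRep, Fin.forall_fin_one, Fin.exists_fin_one]

theorem MaxPlusRep.adj_or_adj (h : MaxPlusRep G k f t) (i : Fin k) {a b c d : V}
    (hab : t ≤ f a i + f b i) (hcd : t ≤ f c i + f d i) (hac : a ≠ c) (hbd : b ≠ d) :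
    G.Adj a c ∨ G.Adj b d := by
  by_cases hsum : t ≤ f a i + f c i
  · exact Or.inl ((h.2 a c hac).mpr ⟨i, hsum⟩)
  · exact Or.inr ((h.2 b d hbd).mpr ⟨i, by linarith⟩)

theorem MaxPlusRep.card_le_of_induced_matching (h : MaxPlusRep G k f t) {m : ℕ}
    {a b : Fin m → V} (hab : ∀ j, G.Adj (a j) (b j)) (ha : a.Injective) (hb : b.Injective)
    (haa : ∀ j j', ¬G.Adj (a j) (a j')) (hbb : ∀ j j', ¬G.Adj (b j) (b j')) : m ≤ k := by
  choose w hw using fun j => (h.2 _ _ (hab j).ne).mp (hab j)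
  by_contra! hlt
  obtain ⟨j, j', hne, hw'⟩ := Fintype.exists_ne_map_eq_of_card_lt w (by simpa using hlt)
  rcases h.adj_or_adj (w j) (hw j) (hw' ▸ hw j') (ha.ne hne) (hb.ne hne) with h' | h'
  exacts [haa _ _ h', hbb _ _ h']

open Classical in
noncomputable def vertexCoverRep (G : SimpleGraph V) (c : Fin k → V) : V → Fin k → ℝ :=
  fun x i => if x = c i then 1 else if G.Adj (c i) x then 0 else -2

theorem maxPlusRep_vertexCoverRep {c : Fin k → V}
    (hc : ∀ x y, G.Adj x y → ∃ i, c i = x ∨ c i = y) :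
    MaxPlusRep G k (vertexCoverRep G c) 1 := by
  refine ⟨one_pos, fun x y hxy => ⟨fun hadj => ?_, fun ⟨i, hi⟩ => ?_⟩⟩
  · obtain ⟨i, rfl | rfl⟩ := hc x y hadj
    · exact ⟨i, by simp [vertexCoverRep, hadj, hxy.symm]⟩
    · exact ⟨i, by simp [vertexCoverRep, hadj.symm, hxy]⟩
  · unfold vertexCoverRep at hi
    split_ifs at hi <;> subst_vars <;> first
      | exact absurd rfl hxy | solve_by_elim [G.symm] | norm_num at hi

/-- The new coordinate is `0` at `v`, `t` at its neighbours and `t / 2` elsewhere; in the old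
coordinates `v` gets a value so large that it never fails the threshold there. -/
theorem MinPlusRep.exists_of_induce_compl_singleton [Finite V] {v : V}
    {f : ({v}ᶜ : Set V) → Fin k → ℝ} (h : MinPlusRep (G.induce {v}ᶜ) k f t) :
    ∃ g : V → Fin (k + 1) → ℝ, MinPlusRep G (k + 1) g t := by
  classical
  obtain ⟨M, hM⟩ := Finite.exists_le fun p : ({v}ᶜ : Set V) × Fin k => t - f p.1 p.2
  let g : V → Fin (k + 1) → ℝ := fun x =>
    Fin.snoc (if hx : x = v then fun _ => M else f ⟨x, hx⟩)
      (if x = v then 0 else if G.Adj v x then t else t / 2)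
  have key : ∀ x y, x ≠ y → y ≠ v → (G.Adj x y ↔ ∀ i, t ≤ g x i + g y i) := by
    intro x y hxy hy
    simp only [Fin.forall_fin_succ', g, Fin.snoc_castSucc, Fin.snoc_last, dif_neg hy, if_neg hy]
    by_cases hx : x = v
    · subst hx
      simp only [dite_true, if_true, zero_add]
      split_ifs with hadj
      · simpa [hadj] using fun i => hM (⟨y, hy⟩, i)
      · simp only [hadj, false_iff, not_and_or]
        exact Or.inr (by linarith [h.1])
    · simp only [dif_neg hx, if_neg hx]
      rw [← h.2 ⟨x, hx⟩ ⟨y, hy⟩ (fun e => hxy (congrArg Subtype.val e)), comap_adj]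
      simp only [Function.Embedding.subtype_apply, iff_self_and]
      intro _
      split_ifs <;> linarith [h.1]
  refine ⟨g, h.1, fun x y hxy => ?_⟩
  by_cases hy : y = v
  · subst hy
    rw [G.adj_comm, key y x hxy.symm hxy]
    simp only [add_comm]
  · exact key x y hxy hy

theorem le_of_maxPlusRep_pathGraph {n : ℕ} {f : Fin n → Fin k → ℝ}
    (h : MaxPlusRep (pathGraph n) k f t) : n / 2 ≤ k := by
  refine h.card_le_of_induced_matching (a := fun j => ⟨2 * j, by have := j.2; omega⟩)
    (b := fun j => ⟨2 * j + 1, by have := j.2; omega⟩) (fun j => ?_) (fun j j' hj => ?_)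
    (fun j j' hj => ?_) (fun j j' => ?_) (fun j j' => ?_) <;>
    simp [pathGraph_adj, Fin.ext_iff] at * <;> omega

theorem exists_odd_of_pathGraph_adj {n : ℕ} {x y : Fin n} (h : (pathGraph n).Adj x y) :
    ∃ j : Fin (n / 2), (⟨2 * j + 1, by omega⟩ : Fin n) = x ∨ ⟨2 * j + 1, by omega⟩ = y := by
  rw [pathGraph_adj] at h
  have := x.2
  have := y.2
  rcases (by omega : x.val % 2 = 1 ∨ y.val % 2 = 1) with hx | hy
  · exact ⟨⟨x / 2, by omega⟩, Or.inl (Fin.ext (by simp; omega))⟩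
  · exact ⟨⟨y / 2, by omega⟩, Or.inr (Fin.ext (by simp; omega))⟩

theorem rhoTHat_pathGraph {n : ℕ} (hn : 2 ≤ n) : rhoTHat (pathGraph n) = n / 2 :=
  rhoTHat_eq_of_maxPlusRep (by omega)
    (maxPlusRep_vertexCoverRep fun _ _ => exists_odd_of_pathGraph_adj)
    fun _ _ _ _ h => le_of_maxPlusRep_pathGraph h

def zigzag (a : ℕ) : ℤ := (-1) ^ a * a

theorem abs_zigzag_add_zigzag_le_one_iff {a b : ℕ} (hab : a ≠ b) :
    |zigzag a + zigzag b| ≤ 1 ↔ a + 1 = b ∨ b + 1 = a := by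
  rw [abs_le]
  rcases Nat.even_or_odd a with ha | ha <;> rcases Nat.even_or_odd b with hb | hb <;>
    simp only [zigzag, ha.neg_one_pow, hb.neg_one_pow] <;>
    rcases ha with ⟨a, rfl⟩ <;> rcases hb with ⟨b, rfl⟩ <;> push_cast <;> omega

def pathRep (n : ℕ) : Fin n → Fin 2 → ℝ := fun a => ![1 + zigzag a, 1 - zigzag a]

theorem minPlusRep_pathRep (n : ℕ) : MinPlusRep (pathGraph n) 2 (pathRep n) 1 := by
  refine ⟨one_pos, fun x y hxy => ?_⟩
  rw [pathGraph_adj, ← abs_zigzag_add_zigzag_le_one_iff (Fin.val_ne_of_ne hxy), abs_le,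
    Fin.forall_fin_two]
  simp only [pathRep, Matrix.cons_val_zero, Matrix.cons_val_one]
  rw [← Int.cast_le (R := ℝ), ← Int.cast_le (R := ℝ)]
  push_cast
  constructor <;> rintro ⟨h₁, h₂⟩ <;> constructor <;> linarith

theorem rhoT_pathGraph {n : ℕ} (hn : 4 ≤ n) : rhoT (pathGraph n) = 2 := by
  refine rhoT_eq_of_minPlusRep two_pos (minPlusRep_pathRep n) fun m g s hm h => ?_
  by_contra! hm2
  obtain rfl : m = 1 := by omega
  have := le_of_maxPlusRep_pathGraph (minPlusRep_one_iff_maxPlusRep_one.mp h)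
  omega

theorem Fin.val_sub_eq_one_iff {n : ℕ} {a b : Fin n} (ha : a.val ≠ 0) :
    (a - b).val = 1 ↔ a.val = b.val + 1 := by
  rcases le_or_gt b a with hba | hab
  · rw [Fin.sub_val_of_le hba]
    have := Fin.le_def.mp hba
    omega
  · rw [Fin.coe_sub_iff_lt.mpr hab]
    have := Fin.lt_def.mp hab
    have := b.2
    omega

theorem cycleGraph_adj_iff_pathGraph_adj {n : ℕ} {x y : Fin n} (hx : x.val ≠ 0)
    (hy : y.val ≠ 0) : (cycleGraph n).Adj x y ↔ (pathGraph n).Adj x y := by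
  rw [cycleGraph_adj', pathGraph_adj, Fin.val_sub_eq_one_iff hx, Fin.val_sub_eq_one_iff hy]
  omega

theorem rhoT_cycleGraph_le_three {n : ℕ} (hn : 0 < n) : rhoT (cycleGraph n) ≤ 3 := by
  have hne {x : Fin n} (hx : x ∈ ({⟨0, hn⟩} : Set (Fin n))ᶜ) : x.val ≠ 0 :=
    fun h => hx (Fin.ext h)
  have hpath : MinPlusRep ((cycleGraph n).induce {⟨0, hn⟩}ᶜ) 2 (fun x => pathRep n x) 1 :=
    ⟨one_pos, fun x y hxy => by
      rw [comap_adj, Function.Embedding.subtype_apply, Function.Embedding.subtype_apply,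
        cycleGraph_adj_iff_pathGraph_adj (hne x.2) (hne y.2)]
      exact (minPlusRep_pathRep n).2 x y (fun e => hxy (Subtype.ext e))⟩
  obtain ⟨g, hg⟩ := hpath.exists_of_induce_compl_singleton
  exact Nat.sInf_le ⟨by norm_num, g, 1, hg⟩

end

/-- For every `n ≥ 3`, `ρ_T(C_n) ≤ 3`; moreover `ρ_T` and `ρ_T̂` can differ:
`ρ_T(P_6) = 2` while `ρ_T̂(P_6) = 3`. -/
theorem stmt_19 :
    (∀ n : ℕ, 3 ≤ n → rhoT (SimpleGraph.cycleGraph n) ≤ 3) ∧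
      rhoT (SimpleGraph.pathGraph 6) = 2 ∧ rhoTHat (SimpleGraph.pathGraph 6) = 3 :=
  ⟨fun _ hn => rhoT_cycleGraph_le_three (by omega), rhoT_pathGraph (by norm_num),
    rhoTHat_pathGraph (by norm_num)⟩
end
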